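/- Let r ∈ ℕ, 𝔭 = (p_1,…,p_r) with p_i > 0, q > 0, N ≥ 1 and M ∈ ℕ. Let f_0,…,f_{N−1} be continuous functions on 𝔻_𝔭^cut × 𝔻_q, holomorphic in the second variable ξ ∈ 𝔻_q for each fixed ζ, with Taylor coefficients a_{k,n}(ζ) at ξ = 0. Let c_{l,i} : 𝔻_𝔭^cut → ℂ be continuous for l ∈ ℕ and 0 ≤ i ≤ M, and set c_{l,i} = 0 for i > M. Define the operator θ on such arrays by (θc)_{l,i} = l·c_{l,i} + (i+1)·c_{l,i+1} (the action of ξ d/dξ on Σ_{i,l} c_{l,i} ξ^l (log ξ)^i). Assume that the formal series ψ = Σ_{i=0}^M Σ_{l≥0} c_{l,i}(ζ) ξ^l (log ξ)^i satisfies ((ξ d/dξ)^N + Σ_{k=0}^{N−1} f_k (ξ d/dξ)^k) ψ = 0 coefficientwise, i.e. for every ζ ∈ 𝔻_𝔭^cut, every P ∈ ℕ and every i with 0 ≤ i ≤ M: (θ^N c)_{P,i}(ζ) + Σ_{k=0}^{N−1} Σ_{l=0}^{P} a_{k,P−l}(ζ)·(θ^k c)_{l,i}(ζ) = 0. Then for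 each i ∈ {0,…,M} the series Σ_{l≥0} c_{l,i}(ζ) ξ^l converges absolutely and locally uniformly on 𝔻_𝔭^cut × 𝔻_q. -/

import Mathlib

noncomputable section

/-- The cut plane `ℂ^cut = ℂ ∖ ℝ_{≤0}`. -/
def cutPlane : Set ℂ := {w : ℂ | 0 < w.re ∨ w.im ≠ 0}

/-- The cut disc `𝔻_t^cut = 𝔻_t ∩ ℂ^cut`. -/
def cutDisk (t : ℝ) : Set ℂ := {w : ℂ | w ∈ cutPlane ∧ ‖w‖ < t}

/-- The cut polydisc `𝔻_𝔭^cut = ∏_{i} 𝔻_{p_i}^cut ⊆ ℂ^r`. -/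
def polyCutDisk {r : ℕ} (p : Fin r → ℝ) : Set (Fin r → ℂ) :=
  {ζ | ∀ i, ζ i ∈ cutDisk (p i)}

/-- The action of `ξ d/dξ` on the coefficient array of a formal series
`Σ_{i,l} c_{l,i} ξ^l (log ξ)^i`: `(θc)_{l,i} = l·c_{l,i} + (i+1)·c_{l,i+1}`. -/
def thetaOp {r : ℕ} (c : ℕ → ℕ → (Fin r → ℂ) → ℂ) : ℕ → ℕ → (Fin r → ℂ) → ℂ :=
  fun l i ζ => (l : ℂ) * c l i ζ + ((i : ℂ) + 1) * c l (i + 1) ζ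

/-!
Write `s_l(ζ) = ∑_{i ≤ M} ‖c_{l,i}(ζ)‖`. On the `l`-th row, `θ` acts as multiplication by `l` plus
a nilpotent shift of norm at most `M + 1`, so `θ^N` agrees with `l^N` up to `O(l^{N-1})` and each
`θ^k` with `k < N` is `O(l^{N-1})`. For `R < ρ < q`, Cauchy's estimate bounds the Taylor
coefficients of the `f_k` by `C ρ^{-n}` uniformly on a compact `K`. The recursion then gives
`l^N s_l ≤ O(l^{N-1}) (s_l + ∑_{m<l} ρ^{m-l} s_m)`, hence, for large `l`,
`l · sup_K s_l ≤ D ∑_{m<l} ρ^{m-l} sup_K s_m`. Such a recursion keeps `sup_K s_l · ρ'^l` bounded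
for every `ρ' < ρ`, and the claim follows by comparison with a geometric series.
-/

open Finset Metric FormalMultilinearSeries
open scoped NNReal

lemma hasFPowerSeriesOnBall_ofScalars_of_hasSum {g : ℂ → ℂ} {b : ℕ → ℂ} {q : ℝ} {r : ℝ≥0}
    (hb : ∀ ξ ∈ ball (0 : ℂ) q, HasSum (fun n => b n * ξ ^ n) (g ξ))
    (hr : 0 < r) (hrq : (r : ℝ) < q) :
    HasFPowerSeriesOnBall g (ofScalars ℂ b) 0 r where
  r_le := by
    have hmem : ((r : ℝ) : ℂ) ∈ ball (0 : ℂ) q := by simpa using hrq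
    refine (ofScalars ℂ b).le_radius_of_tendsto (l := 0) ?_
    simpa [ofScalars_norm] using (hb _ hmem).summable.tendsto_atTop_zero.norm
  r_pos := by exact_mod_cast hr
  hasSum {y} hy := by
    have hyq : y ∈ ball (0 : ℂ) q := by
      rw [mem_ball_zero_iff]
      exact (by simpa using hy : ‖y‖ < r).trans hrq
    simpa [ofScalars_apply_eq, mul_comm] using hb y hyq

lemma norm_mul_pow_le_of_hasFPowerSeriesOnBall_ofScalars {g : ℂ → ℂ} {b : ℕ → ℂ} {r : ℝ≥0}
    {ρ C : ℝ} (hg : HasFPowerSeriesOnBall g (ofScalars ℂ b) 0 r) (hρ : 0 < ρ) (hρr : ρ < r)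
    (hC : ∀ ξ ∈ sphere (0 : ℂ) ρ, ‖g ξ‖ ≤ C) (n : ℕ) :
    ‖b n‖ * ρ ^ n ≤ C := by
  have hdiff : DiffContOnCl ℂ g (ball 0 ρ) := by
    refine (hg.differentiableOn.mono ?_).diffContOnCl
    rw [closure_ball _ hρ.ne']
    intro ξ hξ
    simp only [mem_closedBall, dist_zero_right] at hξ
    simpa using hξ.trans_lt hρr
  have hderiv : iteratedDeriv n g 0 = n.factorial * b n := by
    simpa [iteratedDeriv_eq_iteratedFDeriv, ofScalars_apply_eq] using
      (hg.factorial_smul 1 n).symm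
  have hcauchy := Complex.norm_iteratedDeriv_le_of_forall_mem_sphere_norm_le n hρ hdiff hC
  rw [hderiv, norm_mul, Complex.norm_natCast, mul_div_assoc] at hcauchy
  exact (le_div_iff₀ (by positivity)).mp (le_of_mul_le_mul_left hcauchy (by positivity))

lemma norm_coeff_le_of_hasSum {g : ℂ → ℂ} {b : ℕ → ℂ} {q ρ C : ℝ}
    (hb : ∀ ξ ∈ ball (0 : ℂ) q, HasSum (fun n => b n * ξ ^ n) (g ξ)) (hρ : 0 < ρ) (hρq : ρ < q)
    (hC : ∀ ξ ∈ sphere (0 : ℂ) ρ, ‖g ξ‖ ≤ C) (n : ℕ) :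
    ‖b n‖ ≤ C * ρ⁻¹ ^ n := by
  obtain ⟨r, hρr, hrq⟩ := exists_between hρq
  have hg := hasFPowerSeriesOnBall_ofScalars_of_hasSum (r := ⟨r, (hρ.trans hρr).le⟩) hb
    (hρ.trans hρr) hrq
  rw [inv_pow, ← div_eq_mul_inv, le_div_iff₀ (pow_pos hρ n)]
  exact norm_mul_pow_le_of_hasFPowerSeriesOnBall_ofScalars hg hρ hρr hC n

lemma exists_norm_coeff_le {X : Type*} [TopologicalSpace X] {S K : Set X} {N : ℕ} {q ρ : ℝ}
    {f : ℕ → X → ℂ → ℂ} {a : ℕ → ℕ → X → ℂ}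
    (hf : ∀ k < N, ContinuousOn (fun w : X × ℂ => f k w.1 w.2) (S ×ˢ ball (0 : ℂ) q))
    (ha : ∀ k < N, ∀ ζ ∈ S, ∀ ξ ∈ ball (0 : ℂ) q, HasSum (fun n => a k n ζ * ξ ^ n) (f k ζ ξ))
    (hK : IsCompact K) (hKS : K ⊆ S) (hρ : 0 < ρ) (hρq : ρ < q) :
    ∃ C, 0 ≤ C ∧ ∀ k < N, ∀ ζ ∈ K, ∀ n, ‖a k n ζ‖ ≤ C * ρ⁻¹ ^ n := by
  have hsub : K ×ˢ sphere (0 : ℂ) ρ ⊆ S ×ˢ ball (0 : ℂ) q :=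
    Set.prod_mono hKS fun ξ hξ => by simpa [mem_sphere_zero_iff_norm.mp hξ] using hρq
  obtain ⟨C, hC⟩ := (hK.prod (isCompact_sphere 0 ρ)).exists_bound_of_continuousOn
    (f := fun w (k : Fin N) => f k w.1 w.2) (continuousOn_pi.mpr fun k => (hf k k.2).mono hsub)
  refine ⟨max C 0, le_max_right _ _, fun k hk ζ hζ n => norm_coeff_le_of_hasSum
    (ha k hk ζ (hKS hζ)) hρ hρq (fun ξ hξ => ?_) n⟩
  exact (norm_le_pi_norm (fun k : Fin N => f k ζ ξ) ⟨k, hk⟩).trans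
    ((hC (ζ, ξ) ⟨hζ, hξ⟩).trans (le_max_left _ _))

lemma sum_range_pow_sub_le {t : ℝ} (ht0 : 0 ≤ t) (ht1 : t < 1) (l : ℕ) :
    ∑ m ∈ range l, t ^ (l - m) ≤ (1 - t)⁻¹ := by
  calc ∑ m ∈ range l, t ^ (l - m) ≤ ∑ m ∈ range (l + 1), t ^ (l - m) :=
        sum_le_sum_of_subset_of_nonneg (range_subset_range.mpr l.le_succ)
          fun _ _ _ => pow_nonneg ht0 _
    _ = ∑ m ∈ range (l + 1), t ^ m := by
        simpa using sum_range_reflect (fun m => t ^ m) (l + 1)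
    _ ≤ (1 - t)⁻¹ := by
        simpa [← range_eq_Ico] using geom_sum_Ico_le_of_lt_one (m := 0) (n := l + 1) ht0 ht1

lemma bddAbove_range_of_mul_le_sum_pow {v : ℕ → ℝ} {D t : ℝ} {L : ℕ} (hv : ∀ l, 0 ≤ v l)
    (hD : 0 ≤ D) (ht0 : 0 ≤ t) (ht1 : t < 1)
    (h : ∀ l ≥ L, l * v l ≤ D * ∑ m ∈ range l, t ^ (l - m) * v m) :
    BddAbove (Set.range v) := by
  set L' := max L ⌈D * (1 - t)⁻¹⌉₊ + 1
  set B := ∑ m ∈ range L', v m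
  have hB : 0 ≤ B := sum_nonneg fun m _ => hv m
  refine ⟨B, Set.forall_mem_range.mpr fun l => ?_⟩
  induction l using Nat.strong_induction_on with
  | _ l ih =>
    obtain hl | hl := lt_or_ge l L'
    · exact single_le_sum (fun m _ => hv m) (mem_range.mpr hl)
    have hlpos : (0 : ℝ) < l := by exact_mod_cast (show 0 < l by omega)
    have hDl : D * (1 - t)⁻¹ ≤ l :=
      (Nat.le_ceil _).trans (by exact_mod_cast (show ⌈D * (1 - t)⁻¹⌉₊ ≤ l by omega))
    refine le_of_mul_le_mul_left ?_ hlpos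
    calc l * v l ≤ D * ∑ m ∈ range l, t ^ (l - m) * v m := h l (by omega)
      _ ≤ D * ∑ m ∈ range l, t ^ (l - m) * B := by
          gcongr with m hm
          exact ih m (mem_range.mp hm)
      _ ≤ D * ((1 - t)⁻¹ * B) := by
          rw [← sum_mul]
          gcongr
          exact sum_range_pow_sub_le ht0 ht1 l
      _ ≤ l * B := by
          rw [← mul_assoc]
          exact mul_le_mul_of_nonneg_right hDl hB

lemma summable_mul_pow_of_mul_le_sum {u : ℕ → ℝ} {D ρ R : ℝ} {L : ℕ} (hu : ∀ l, 0 ≤ u l)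
    (hD : 0 ≤ D) (hR : 0 ≤ R) (hRρ : R < ρ)
    (h : ∀ l ≥ L, l * u l ≤ D * ∑ m ∈ range l, ρ⁻¹ ^ (l - m) * u m) :
    Summable fun l => u l * R ^ l := by
  obtain ⟨ρ', hRρ', hρ'ρ⟩ := exists_between hRρ
  have hρ' : 0 < ρ' := hR.trans_lt hRρ'
  have hρ : 0 < ρ := hρ'.trans hρ'ρ
  have hv : ∀ l, 0 ≤ u l * ρ' ^ l := fun l => mul_nonneg (hu l) (by positivity)
  have hrec : ∀ l ≥ L, l * (u l * ρ' ^ l) ≤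
      D * ∑ m ∈ range l, (ρ' / ρ) ^ (l - m) * (u m * ρ' ^ m) := fun l hl => by
    have hweight : ∀ m ∈ range l, ρ⁻¹ ^ (l - m) * u m * ρ' ^ l =
        (ρ' / ρ) ^ (l - m) * (u m * ρ' ^ m) := fun m hm => by
      rw [← Nat.sub_add_cancel (mem_range.mp hm).le, pow_add, Nat.add_sub_cancel]
      ring
    calc l * (u l * ρ' ^ l) = l * u l * ρ' ^ l := by ring
      _ ≤ D * (∑ m ∈ range l, ρ⁻¹ ^ (l - m) * u m) * ρ' ^ l :=
          mul_le_mul_of_nonneg_right (h l hl) (by positivity)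
      _ = _ := by rw [mul_assoc, sum_mul, sum_congr rfl hweight]
  obtain ⟨B, hB⟩ := bddAbove_range_of_mul_le_sum_pow hv hD (by positivity)
    ((div_lt_one hρ).mpr hρ'ρ) hrec
  refine Summable.of_nonneg_of_le (fun l => mul_nonneg (hu l) (pow_nonneg hR l)) (fun l => ?_)
    ((summable_geometric_of_lt_one (by positivity) ((div_lt_one hρ').mpr hRρ')).mul_left B)
  calc u l * R ^ l = u l * ρ' ^ l * (R / ρ') ^ l := by
        rw [div_pow, mul_assoc, mul_div_cancel₀ _ (pow_pos hρ' l).ne']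
    _ ≤ B * (R / ρ') ^ l := by gcongr; exact hB (Set.mem_range_self l)

def coeffNorm {X : Type*} (M : ℕ) (c : ℕ → ℕ → X → ℂ) (l : ℕ) (ζ : X) : ℝ :=
  ∑ i ∈ range (M + 1), ‖c l i ζ‖

lemma coeffNorm_nonneg {X : Type*} (M : ℕ) (c : ℕ → ℕ → X → ℂ) (l : ℕ) (ζ : X) :
    0 ≤ coeffNorm M c l ζ :=
  sum_nonneg fun _ _ => norm_nonneg _

lemma norm_le_coeffNorm {X : Type*} {M i : ℕ} (c : ℕ → ℕ → X → ℂ) (l : ℕ) (ζ : X) (hi : i ≤ M) :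
    ‖c l i ζ‖ ≤ coeffNorm M c l ζ :=
  single_le_sum (f := fun i => ‖c l i ζ‖) (fun _ _ => norm_nonneg _) (mem_range.mpr (by omega))

section Theta

variable {r M : ℕ} {c : ℕ → ℕ → (Fin r → ℂ) → ℂ}

lemma thetaOp_eq_zero_of_lt (hc : ∀ l i, M < i → ∀ ζ, c l i ζ = 0) :
    ∀ l i, M < i → ∀ ζ, thetaOp c l i ζ = 0 := by
  intro l i hi ζ
  simp [thetaOp, hc l i hi ζ, hc l (i + 1) (by omega) ζ]

lemma thetaOp_iterate_eq_zero_of_lt (hc : ∀ l i, M < i → ∀ ζ, c l i ζ = 0) (k : ℕ) :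
    ∀ l i, M < i → ∀ ζ, (thetaOp^[k] c) l i ζ = 0 := by
  induction k with
  | zero => exact hc
  | succ k ih =>
    rw [Function.iterate_succ_apply']
    exact thetaOp_eq_zero_of_lt ih

lemma sum_norm_thetaOp_sub_le (hc : ∀ l i, M < i → ∀ ζ, c l i ζ = 0) (l : ℕ) (ζ : Fin r → ℂ) :
    ∑ i ∈ range (M + 1), ‖thetaOp c l i ζ - l * c l i ζ‖ ≤ (M + 1) * coeffNorm M c l ζ := by
  have hshift : ∑ i ∈ range (M + 1), ‖c l (i + 1) ζ‖ ≤ coeffNorm M c l ζ := by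
    have h := sum_range_succ' (fun i => ‖c l i ζ‖) (M + 1)
    rw [sum_range_succ, hc l (M + 1) (by omega) ζ, norm_zero, add_zero] at h
    unfold coeffNorm
    linarith [norm_nonneg (c l 0 ζ)]
  calc ∑ i ∈ range (M + 1), ‖thetaOp c l i ζ - l * c l i ζ‖
      = ∑ i ∈ range (M + 1), ((i : ℝ) + 1) * ‖c l (i + 1) ζ‖ := by
        refine sum_congr rfl fun i _ => ?_
        rw [thetaOp, add_sub_cancel_left, norm_mul]
        norm_cast
    _ ≤ ∑ i ∈ range (M + 1), ((M : ℝ) + 1) * ‖c l (i + 1) ζ‖ := by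
        gcongr with i hi
        exact_mod_cast Nat.lt_succ_iff.mp (mem_range.mp hi)
    _ ≤ (M + 1) * coeffNorm M c l ζ := by
        rw [← mul_sum]
        gcongr

lemma coeffNorm_thetaOp_le (hc : ∀ l i, M < i → ∀ ζ, c l i ζ = 0) (l : ℕ) (ζ : Fin r → ℂ) :
    coeffNorm M (thetaOp c) l ζ ≤ (l + M + 1) * coeffNorm M c l ζ := by
  calc coeffNorm M (thetaOp c) l ζ
      ≤ ∑ i ∈ range (M + 1), (‖thetaOp c l i ζ - l * c l i ζ‖ + l * ‖c l i ζ‖) := by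
        refine sum_le_sum fun i _ => ?_
        simpa using norm_le_norm_sub_add (thetaOp c l i ζ) (l * c l i ζ)
    _ ≤ (M + 1) * coeffNorm M c l ζ + l * coeffNorm M c l ζ := by
        rw [sum_add_distrib, ← mul_sum]
        exact add_le_add (sum_norm_thetaOp_sub_le hc l ζ) le_rfl
    _ = (l + M + 1) * coeffNorm M c l ζ := by ring

lemma coeffNorm_thetaOp_iterate_le (hc : ∀ l i, M < i → ∀ ζ, c l i ζ = 0) (k l : ℕ)
    (ζ : Fin r → ℂ) :
    coeffNorm M (thetaOp^[k] c) l ζ ≤ ((l : ℝ) + M + 1) ^ k * coeffNorm M c l ζ := by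
  induction k with
  | zero => simp
  | succ k ih =>
    rw [Function.iterate_succ_apply', pow_succ', mul_assoc]
    exact (coeffNorm_thetaOp_le (thetaOp_iterate_eq_zero_of_lt hc k) l ζ).trans
      (mul_le_mul_of_nonneg_left ih (by positivity))

lemma sum_norm_thetaOp_iterate_sub_le (hc : ∀ l i, M < i → ∀ ζ, c l i ζ = 0) (k l : ℕ)
    (ζ : Fin r → ℂ) :
    ∑ i ∈ range (M + 1), ‖(thetaOp^[k + 1] c) l i ζ - (l : ℂ) ^ (k + 1) * c l i ζ‖ ≤
      (k + 1) * (M + 1) * ((l : ℝ) + M + 1) ^ k * coeffNorm M c l ζ := by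
  induction k with
  | zero => simpa using sum_norm_thetaOp_sub_le hc l ζ
  | succ k ih =>
    set e := thetaOp^[k + 1] c
    have hsplit : ∀ i, (thetaOp^[k + 2] c) l i ζ - (l : ℂ) ^ (k + 2) * c l i ζ =
        (thetaOp e l i ζ - l * e l i ζ) + l * (e l i ζ - (l : ℂ) ^ (k + 1) * c l i ζ) := by
      intro i
      rw [Function.iterate_succ_apply']
      ring
    have hl : (l : ℝ) ≤ l + M + 1 := by linarith [(M.cast_nonneg : (0 : ℝ) ≤ M)]
    calc ∑ i ∈ range (M + 1), ‖(thetaOp^[k + 2] c) l i ζ - (l : ℂ) ^ (k + 2) * c l i ζ‖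
        ≤ ∑ i ∈ range (M + 1), (‖thetaOp e l i ζ - l * e l i ζ‖ +
            l * ‖e l i ζ - (l : ℂ) ^ (k + 1) * c l i ζ‖) := by
          refine sum_le_sum fun i _ => ?_
          rw [hsplit, ← Complex.norm_natCast l, ← norm_mul]
          exact norm_add_le _ _
      _ ≤ (M + 1) * coeffNorm M e l ζ +
            l * ((k + 1) * (M + 1) * ((l : ℝ) + M + 1) ^ k * coeffNorm M c l ζ) := by
          rw [sum_add_distrib, ← mul_sum]
          exact add_le_add (sum_norm_thetaOp_sub_le (thetaOp_iterate_eq_zero_of_lt hc _) l ζ)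
            (mul_le_mul_of_nonneg_left ih (by positivity))
      _ ≤ (M + 1) * (((l : ℝ) + M + 1) ^ (k + 1) * coeffNorm M c l ζ) +
            (l + M + 1) * ((k + 1) * (M + 1) * ((l : ℝ) + M + 1) ^ k * coeffNorm M c l ζ) := by
          have := coeffNorm_nonneg M c l ζ
          gcongr
          exact coeffNorm_thetaOp_iterate_le hc _ l ζ
      _ = _ := by push_cast; ring

end Theta

lemma mul_le_of_pow_succ_mul_le {n M l : ℕ} {Λ x y : ℝ} (hx : 0 ≤ x) (hy : 0 ≤ y) (hΛ : 0 ≤ Λ)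
    (hl : 2 * ((n + 1) * (M + 2) ^ n * Λ) ≤ l)
    (h : (l : ℝ) ^ (n + 1) * x ≤ (n + 1) * ((l : ℝ) + M + 1) ^ n * (Λ * x + y)) :
    l * x ≤ 2 * ((n + 1) * (M + 2) ^ n) * y := by
  obtain rfl | hl0 := Nat.eq_zero_or_pos l
  · simp only [CharP.cast_eq_zero, zero_mul]
    positivity
  have hlpos : (0 : ℝ) < l := by exact_mod_cast hl0
  have hbase : (l : ℝ) + M + 1 ≤ (M + 2) * l := by
    have : (1 : ℝ) ≤ l := by exact_mod_cast hl0
    nlinarith [(M.cast_nonneg : (0 : ℝ) ≤ M)]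
  have hcancel : (l : ℝ) ^ n * (l * x) ≤ (l : ℝ) ^ n * ((n + 1) * (M + 2) ^ n * (Λ * x + y)) :=
    calc (l : ℝ) ^ n * (l * x) = (l : ℝ) ^ (n + 1) * x := by ring
      _ ≤ (n + 1) * ((l : ℝ) + M + 1) ^ n * (Λ * x + y) := h
      _ ≤ (n + 1) * ((M + 2) * l) ^ n * (Λ * x + y) := by gcongr
      _ = (l : ℝ) ^ n * ((n + 1) * (M + 2) ^ n * (Λ * x + y)) := by rw [mul_pow]; ring
  have := le_of_mul_le_mul_left hcancel (pow_pos hlpos n)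
  nlinarith

section Recurrence

variable {r M n : ℕ} {c a : ℕ → ℕ → (Fin r → ℂ) → ℂ} {ζ : Fin r → ℂ} {C ρ : ℝ}

lemma coeffNorm_thetaOp_iterate_le_of_le (hc : ∀ l i, M < i → ∀ ζ, c l i ζ = 0) {k m l : ℕ}
    (hk : k ≤ n) (hm : m ≤ l) (ζ : Fin r → ℂ) :
    coeffNorm M (thetaOp^[k] c) m ζ ≤ ((l : ℝ) + M + 1) ^ n * coeffNorm M c m ζ := by
  refine (coeffNorm_thetaOp_iterate_le hc k m ζ).trans
    (mul_le_mul_of_nonneg_right ?_ (coeffNorm_nonneg M c m ζ))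
  have hml : (m : ℝ) ≤ l := by exact_mod_cast hm
  calc ((m : ℝ) + M + 1) ^ k ≤ ((l : ℝ) + M + 1) ^ k := by gcongr
    _ ≤ ((l : ℝ) + M + 1) ^ n := pow_le_pow_right₀ (by linarith [(l.cast_nonneg : (0 : ℝ) ≤ l),
        (M.cast_nonneg : (0 : ℝ) ≤ M)]) hk

lemma pow_mul_coeffNorm_le (hc : ∀ l i, M < i → ∀ ζ, c l i ζ = 0) (hC : 0 ≤ C) (hρ : 0 < ρ)
    (ha : ∀ k ≤ n, ∀ m, ‖a k m ζ‖ ≤ C * ρ⁻¹ ^ m) {l : ℕ}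
    (hrec : ∀ i ≤ M, (thetaOp^[n + 1] c) l i ζ +
      ∑ k ∈ range (n + 1), ∑ m ∈ range (l + 1), a k (l - m) ζ * (thetaOp^[k] c) m i ζ = 0) :
    (l : ℝ) ^ (n + 1) * coeffNorm M c l ζ ≤ (n + 1) * ((l : ℝ) + M + 1) ^ n *
      ((M + 1 + C) * coeffNorm M c l ζ + C * ∑ m ∈ range l, ρ⁻¹ ^ (l - m) * coeffNorm M c m ζ) := by
  set W := ((l : ℝ) + M + 1) ^ n
  have hi : ∀ i ∈ range (M + 1), (l : ℝ) ^ (n + 1) * ‖c l i ζ‖ ≤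
      ‖(thetaOp^[n + 1] c) l i ζ - (l : ℂ) ^ (n + 1) * c l i ζ‖ +
        ∑ k ∈ range (n + 1), ∑ m ∈ range (l + 1), C * ρ⁻¹ ^ (l - m) * ‖(thetaOp^[k] c) m i ζ‖ := by
    intro i hi
    set S := ∑ k ∈ range (n + 1), ∑ m ∈ range (l + 1), a k (l - m) ζ * (thetaOp^[k] c) m i ζ
    have hlead : (l : ℂ) ^ (n + 1) * c l i ζ =
        -((thetaOp^[n + 1] c) l i ζ - (l : ℂ) ^ (n + 1) * c l i ζ) - S := by
      linear_combination hrec i (by simpa [Nat.lt_succ_iff] using hi)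
    calc (l : ℝ) ^ (n + 1) * ‖c l i ζ‖ = ‖(l : ℂ) ^ (n + 1) * c l i ζ‖ := by simp
      _ ≤ ‖(thetaOp^[n + 1] c) l i ζ - (l : ℂ) ^ (n + 1) * c l i ζ‖ + ‖S‖ := by
        rw [congrArg norm hlead, ← norm_neg ((thetaOp^[n + 1] c) l i ζ - _)]
        exact norm_sub_le _ _
      _ ≤ _ := by
        gcongr
        refine (norm_sum_le _ _).trans (sum_le_sum fun k hk => ?_)
        refine (norm_sum_le _ _).trans (sum_le_sum fun m _ => ?_)
        rw [norm_mul]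
        gcongr
        exact ha k (Nat.lt_succ_iff.mp (mem_range.mp hk)) _
  have hhist : ∑ i ∈ range (M + 1), ∑ k ∈ range (n + 1), ∑ m ∈ range (l + 1),
        C * ρ⁻¹ ^ (l - m) * ‖(thetaOp^[k] c) m i ζ‖ ≤
      (n + 1) * W * (C * ∑ m ∈ range (l + 1), ρ⁻¹ ^ (l - m) * coeffNorm M c m ζ) := by
    rw [sum_comm]
    calc ∑ k ∈ range (n + 1), ∑ i ∈ range (M + 1), ∑ m ∈ range (l + 1),
          C * ρ⁻¹ ^ (l - m) * ‖(thetaOp^[k] c) m i ζ‖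
        = ∑ k ∈ range (n + 1), ∑ m ∈ range (l + 1),
            C * ρ⁻¹ ^ (l - m) * coeffNorm M (thetaOp^[k] c) m ζ := by
          refine sum_congr rfl fun k _ => ?_
          rw [sum_comm]
          simp only [coeffNorm, mul_sum]
      _ ≤ ∑ k ∈ range (n + 1), ∑ m ∈ range (l + 1),
            C * ρ⁻¹ ^ (l - m) * (W * coeffNorm M c m ζ) := by
          gcongr with k hk m hm
          exact coeffNorm_thetaOp_iterate_le_of_le hc (Nat.lt_succ_iff.mp (mem_range.mp hk))
            (Nat.lt_succ_iff.mp (mem_range.mp hm)) ζ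
      _ = (n + 1) * W * (C * ∑ m ∈ range (l + 1), ρ⁻¹ ^ (l - m) * coeffNorm M c m ζ) := by
          rw [sum_const, card_range, nsmul_eq_mul, mul_sum, mul_sum, mul_sum]
          push_cast
          exact sum_congr rfl fun m _ => by ring
  calc (l : ℝ) ^ (n + 1) * coeffNorm M c l ζ
      ≤ (n + 1) * (M + 1) * W * coeffNorm M c l ζ +
          (n + 1) * W * (C * ∑ m ∈ range (l + 1), ρ⁻¹ ^ (l - m) * coeffNorm M c m ζ) := by
        rw [coeffNorm, mul_sum]
        refine (sum_le_sum hi).trans ?_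
        rw [sum_add_distrib]
        exact add_le_add (sum_norm_thetaOp_iterate_sub_le hc n l ζ) hhist
    _ = _ := by rw [sum_range_succ, Nat.sub_self, pow_zero, one_mul]; ring

lemma mul_coeffNorm_le (hc : ∀ l i, M < i → ∀ ζ, c l i ζ = 0) (hC : 0 ≤ C) (hρ : 0 < ρ)
    (ha : ∀ k ≤ n, ∀ m, ‖a k m ζ‖ ≤ C * ρ⁻¹ ^ m) {l : ℕ}
    (hrec : ∀ i ≤ M, (thetaOp^[n + 1] c) l i ζ +
      ∑ k ∈ range (n + 1), ∑ m ∈ range (l + 1), a k (l - m) ζ * (thetaOp^[k] c) m i ζ = 0)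
    (hl : 2 * ((n + 1) * (M + 2) ^ n * (M + 1 + C)) ≤ l) :
    l * coeffNorm M c l ζ ≤
      2 * ((n + 1) * (M + 2) ^ n) * C * ∑ m ∈ range l, ρ⁻¹ ^ (l - m) * coeffNorm M c m ζ := by
  rw [mul_assoc _ C]
  exact mul_le_of_pow_succ_mul_le (coeffNorm_nonneg M c l ζ)
    (mul_nonneg hC (sum_nonneg fun m _ => mul_nonneg (by positivity) (coeffNorm_nonneg M c m ζ)))
    (by positivity) hl (pow_mul_coeffNorm_le hc hC hρ ha hrec)

end Recurrence

lemma mul_sSup_image_le {X : Type*} {K : Set X} {g : X → ℝ} {a b : ℝ} (ha : 0 ≤ a) (hb : 0 ≤ b)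
    (h : ∀ x ∈ K, a * g x ≤ b) : a * sSup (g '' K) ≤ b := by
  obtain rfl | ha := ha.eq_or_lt
  · simpa using hb
  rw [← le_div_iff₀' ha]
  exact Real.sSup_le (Set.forall_mem_image.2 fun x hx => (le_div_iff₀' ha).2 (h x hx))
    (div_nonneg hb ha.le)

theorem stmt_16_general {r : ℕ} (p : Fin r → ℝ)
    (q : ℝ) (N : ℕ) (hN : 1 ≤ N) (M : ℕ)
    (f : ℕ → (Fin r → ℂ) → ℂ → ℂ)
    (hfcont : ∀ k < N, ContinuousOn (fun w : (Fin r → ℂ) × ℂ => f k w.1 w.2)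
      (polyCutDisk p ×ˢ Metric.ball (0 : ℂ) q))
    (a : ℕ → ℕ → (Fin r → ℂ) → ℂ)
    (ha : ∀ k < N, ∀ ζ ∈ polyCutDisk p, ∀ ξ ∈ Metric.ball (0 : ℂ) q,
      HasSum (fun n : ℕ => a k n ζ * ξ ^ n) (f k ζ ξ))
    (c : ℕ → ℕ → (Fin r → ℂ) → ℂ)
    (hccont : ∀ l i, ContinuousOn (c l i) (polyCutDisk p))
    (hcM : ∀ l i, M < i → ∀ ζ, c l i ζ = 0)
    (hrec : ∀ ζ ∈ polyCutDisk p, ∀ P : ℕ, ∀ i ≤ M,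
      (thetaOp^[N] c) P i ζ +
          ∑ k ∈ Finset.range N, ∑ l ∈ Finset.range (P + 1),
            a k (P - l) ζ * (thetaOp^[k] c) l i ζ =
        0) :
    ∀ i ≤ M, ∀ K : Set (Fin r → ℂ), IsCompact K → K ⊆ polyCutDisk p →
      ∀ R : ℝ, 0 < R → R < q →
        Summable (fun l : ℕ =>
          sSup ((fun ζ => ‖c l i ζ‖) '' K) * R ^ l) := by
  intro i hi K hK hKp R hR hRq
  obtain ⟨n, rfl⟩ : ∃ n, N = n + 1 := ⟨N - 1, by omega⟩
  obtain ⟨ρ, hRρ, hρq⟩ := exists_between hRq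
  have hρ : 0 < ρ := hR.trans hRρ
  obtain ⟨C, hC, haC⟩ := exists_norm_coeff_le hfcont ha hK hKp hρ hρq
  set u : ℕ → ℝ := fun l => sSup (coeffNorm M c l '' K)
  have hbdd : ∀ l, BddAbove (coeffNorm M c l '' K) := fun l => (hK.image_of_continuousOn
    (continuousOn_finsetSum _ fun j _ => ((hccont l j).mono hKp).norm)).bddAbove
  have hle_u : ∀ l, ∀ ζ ∈ K, coeffNorm M c l ζ ≤ u l := fun l ζ hζ => le_csSup (hbdd l) ⟨ζ, hζ, rfl⟩
  have hu : ∀ l, 0 ≤ u l := fun l => Real.sSup_nonneg (Set.forall_mem_image.2 fun ζ _ =>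
    coeffNorm_nonneg M c l ζ)
  have hrec_u : ∀ l ≥ ⌈2 * ((n + 1) * (M + 2) ^ n * (M + 1 + C))⌉₊, l * u l ≤
      2 * ((n + 1) * (M + 2) ^ n) * C * ∑ m ∈ range l, ρ⁻¹ ^ (l - m) * u m := by
    intro l hl
    refine mul_sSup_image_le (by positivity)
      (mul_nonneg (by positivity) (sum_nonneg fun m _ => mul_nonneg (by positivity) (hu m)))
      fun ζ hζ => ?_
    refine (mul_coeffNorm_le hcM hC hρ (fun k hk m => haC k (by omega) ζ hζ m)
      (hrec ζ (hKp hζ) l) (Nat.ceil_le.mp hl)).trans ?_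
    gcongr with m
    exact hle_u m ζ hζ
  refine (summable_mul_pow_of_mul_le_sum hu (by positivity) hR.le hRρ hrec_u).of_nonneg_of_le
    (fun l => mul_nonneg (Real.sSup_nonneg (Set.forall_mem_image.2 fun ζ _ => norm_nonneg _))
      (pow_nonneg hR.le l)) fun l => ?_
  gcongr
  exact Real.sSup_le (Set.forall_mem_image.2 fun ζ hζ =>
    (norm_le_coeffNorm c l ζ hi).trans (hle_u l ζ hζ)) (hu l)

/-- Frobenius-type convergence lemma with logarithmic terms.  Let `f_0,…,f_{N−1}`
be continuous on `𝔻_𝔭^cut × 𝔻_q`, holomorphic in `ξ ∈ 𝔻_q` for each fixed `ζ`,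
with Taylor coefficients `a k n ζ` at `ξ = 0`.  Let `c_{l,i} : 𝔻_𝔭^cut → ℂ` be
continuous, vanishing for `i > M`, and assume the formal series
`ψ = Σ_{i≤M} Σ_l c_{l,i}(ζ) ξ^l (log ξ)^i` satisfies
`((ξ d/dξ)^N + Σ_{k<N} f_k (ξ d/dξ)^k) ψ = 0` coefficientwise.  Then for each
`i ∈ {0,…,M}` the series `Σ_l c_{l,i}(ζ) ξ^l` converges absolutely and locally
uniformly on `𝔻_𝔭^cut × 𝔻_q`. -/
theorem stmt_16 {r : ℕ} (p : Fin r → ℝ) (hp : ∀ i, 0 < p i)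
    (q : ℝ) (hq : 0 < q) (N : ℕ) (hN : 1 ≤ N) (M : ℕ)
    (f : ℕ → (Fin r → ℂ) → ℂ → ℂ)
    (hfcont : ∀ k < N, ContinuousOn (fun w : (Fin r → ℂ) × ℂ => f k w.1 w.2)
      (polyCutDisk p ×ˢ Metric.ball (0 : ℂ) q))
    (hfhol : ∀ k < N, ∀ ζ ∈ polyCutDisk p,
      DifferentiableOn ℂ (f k ζ) (Metric.ball (0 : ℂ) q))
    (a : ℕ → ℕ → (Fin r → ℂ) → ℂ)
    (ha : ∀ k < N, ∀ ζ ∈ polyCutDisk p, ∀ ξ ∈ Metric.ball (0 : ℂ) q,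
      HasSum (fun n : ℕ => a k n ζ * ξ ^ n) (f k ζ ξ))
    (c : ℕ → ℕ → (Fin r → ℂ) → ℂ)
    (hccont : ∀ l i, ContinuousOn (c l i) (polyCutDisk p))
    (hcM : ∀ l i, M < i → ∀ ζ, c l i ζ = 0)
    (hrec : ∀ ζ ∈ polyCutDisk p, ∀ P : ℕ, ∀ i ≤ M,
      (thetaOp^[N] c) P i ζ +
          ∑ k ∈ Finset.range N, ∑ l ∈ Finset.range (P + 1),
            a k (P - l) ζ * (thetaOp^[k] c) l i ζ =
        0) :
    ∀ i ≤ M, ∀ K : Set (Fin r → ℂ), IsCompact K → K ⊆ polyCutDisk p →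
      ∀ R : ℝ, 0 < R → R < q →
        Summable (fun l : ℕ =>
          sSup ((fun ζ => ‖c l i ζ‖) '' K) * R ^ l) :=
  stmt_16_general p q N hN M f hfcont a ha c hccont hcM hrec
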